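/- Let G be the group of order p^{2r+1}·2^n described in the context, let H be the subgroup generated by P and b, and let K be a subgroup of H with K normal in H, K ≠ H, K ≠ P, and H/K cyclic. Then the normalizer N_G(K) equals the subgroup generated by P, b, and a^{2^{n−2}}, and (H,K) is a strong Shoda pair of G. -/

import Mathlib

open scoped Classical

namespace Paper

variable {G : Type*} [Group G] [Fintype G]

noncomputable instance : Fintype (Subgroup G) :=
  Fintype.ofInjective (fun H : Subgroup G => (H : Set G)) SetLike.coe_injective

/-- `M̂ = (1/|M|) ∑_{m ∈ M} m` in the rational group algebra `ℚ[G]`. -/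
noncomputable def hat (M : Subgroup G) : MonoidAlgebra ℚ G :=
  (Nat.card M : ℚ)⁻¹ • ∑ m : M, MonoidAlgebra.of ℚ G (m : G)

/-- `L` is a normal subgroup of `H` properly containing `K`. -/
def NormalOver (H K L : Subgroup G) : Prop :=
  L ≤ H ∧ K < L ∧ ∀ h ∈ H, ∀ g ∈ L, h⁻¹ * g * h ∈ L

/-- `L` is minimal among the normal subgroups of `H` properly containing `K`. -/
def MinimalOver (H K L : Subgroup G) : Prop :=
  NormalOver H K L ∧ ∀ L' : Subgroup G, NormalOver H K L' → L' ≤ L → L' = L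

/-- `ε(H,K) = K̂` if `H = K`, and otherwise `∏_L (K̂ - L̂)`, the product running over
the normal subgroups `L` of `H` minimal with respect to properly containing `K`
(all such factors commute pairwise, so the product is order-independent). -/
noncomputable def eps (H K : Subgroup G) : MonoidAlgebra ℚ G :=
  if H = K then hat K
  else (({L : Subgroup G | MinimalOver H K L}.toFinset).toList.map
    fun L => hat K - hat L).prod

/-- The subgroup `[H,g] = ⟨g⁻¹h⁻¹gh : h ∈ H⟩`. -/
def commSub (H : Subgroup G) (g : G) : Subgroup G :=
  Subgroup.closure {c : G | ∃ h ∈ H, c = g⁻¹ * h⁻¹ * g * h}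

/-- The quotient `H/K` is cyclic (elementwise formulation: some `h ∈ H` is such that
every `g ∈ H` lies in a coset `h^m K`). -/
def CyclicQuot (H K : Subgroup G) : Prop :=
  ∃ h ∈ H, ∀ g ∈ H, ∃ m : ℤ, (h ^ m)⁻¹ * g ∈ K

/-- `K` is normal in `H` (elementwise formulation). -/
def NormalIn (H K : Subgroup G) : Prop :=
  ∀ h ∈ H, ∀ g ∈ K, h⁻¹ * g * h ∈ K

/-- `(H,K)` is a Shoda pair of `G`. -/
def IsShodaPair (H K : Subgroup G) : Prop :=
  K ≤ H ∧ NormalIn H K ∧ CyclicQuot H K ∧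
    ∀ g : G, commSub H g ⊓ H ≤ K → g ∈ H

/-- `(H,K)` is a strong Shoda pair of `G`: conditions (SS1), (SS2), (SS3).
Maximal abelianness of `H/K` in `N_G(K)/K` is phrased via the Galois correspondence
between subgroups of `N_G(K)/K` and subgroups of `G` lying between `K` and `N_G(K)`. -/
def IsStrongShodaPair (H K : Subgroup G) : Prop :=
  -- (SS1): `H` is a normal subgroup of `N_G(K)`
  (H ≤ Subgroup.normalizer (K : Set G) ∧ ∀ g ∈ Subgroup.normalizer (K : Set G), ∀ h ∈ H, g⁻¹ * h * g ∈ H) ∧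
  -- (SS2): `H/K` is cyclic and a maximal abelian subgroup of `N_G(K)/K`
  (CyclicQuot H K ∧
    (∀ h₁ ∈ H, ∀ h₂ ∈ H, h₁⁻¹ * h₂⁻¹ * h₁ * h₂ ∈ K) ∧
    ∀ C : Subgroup G, K ≤ C → C ≤ Subgroup.normalizer (K : Set G) →
      (∀ c₁ ∈ C, ∀ c₂ ∈ C, c₁⁻¹ * c₂⁻¹ * c₁ * c₂ ∈ K) → H ≤ C → C = H) ∧
  -- (SS3): `ε(H,K)·(g⁻¹ ε(H,K) g) = 0` for `g ∉ N_G(K)`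
  (∀ g : G, g ∉ Subgroup.normalizer (K : Set G) →
    eps H K * (MonoidAlgebra.of ℚ G g⁻¹ * eps H K * MonoidAlgebra.of ℚ G g) = 0)


/-- The data of the group `G = P ⋊ D_{2^n}` of order `p^{2r+1}·2^n`: an odd prime
`p ≡ 1 (mod 4)`, `r ≥ 1`, `n ≥ 3` with `2^{n-1}` the exact power of `2` dividing
`p - 1`, an integer `k` of multiplicative order `2^{n-1}` modulo `p` with inverse `q`
modulo `p`, and generators `x, y₁, …, y_r, z₁, …, z_r, a, b` of `G` subject to the
listed relations (commutator convention `[u,v] = u⁻¹v⁻¹uv`). -/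
structure GData (G : Type*) [Group G] [Fintype G] where
  p : ℕ
  r : ℕ
  n : ℕ
  k : ℕ
  q : ℕ
  x : G
  y : Fin r → G
  z : Fin r → G
  a : G
  b : G
  hp : p.Prime
  hp4 : p % 4 = 1
  hr : 1 ≤ r
  hn : 3 ≤ n
  hdvd : 2 ^ (n - 1) ∣ p - 1
  hndvd : ¬ 2 ^ n ∣ p - 1
  hordk : orderOf ((k : ZMod p)) = 2 ^ (n - 1)
  hkq : ((k : ZMod p)) * (q : ZMod p) = 1
  hcard : Fintype.card G = p ^ (2 * r + 1) * 2 ^ n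
  hgen : Subgroup.closure (({x, a, b} : Set G) ∪ Set.range y ∪ Set.range z) = ⊤
  hxp : x ^ p = 1
  hyp : ∀ i, y i ^ p = 1
  hzp : ∀ i, z i ^ p = 1
  han : a ^ 2 ^ (n - 1) = 1
  hb2 : b ^ 2 = 1
  hxy : ∀ i, x⁻¹ * (y i)⁻¹ * x * y i = 1
  hxz : ∀ i, x⁻¹ * (z i)⁻¹ * x * z i = 1
  hyy : ∀ i j, (y i)⁻¹ * (y j)⁻¹ * y i * y j = 1
  hzz : ∀ i j, (z i)⁻¹ * (z j)⁻¹ * z i * z j = 1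
  hyz : ∀ i, (y i)⁻¹ * (z i)⁻¹ * y i * z i = x
  hyz' : ∀ i j, i ≠ j → (y i)⁻¹ * (z j)⁻¹ * y i * z j = 1
  hax : a⁻¹ * x⁻¹ * a * x = 1
  hay : ∀ i, a⁻¹ * (y i)⁻¹ * a * y i = (y i) ^ (1 - (k : ℤ))
  haz : ∀ i, a⁻¹ * (z i)⁻¹ * a * z i = (z i) ^ (1 - (q : ℤ))
  hbx : b⁻¹ * x⁻¹ * b * x = x ^ 2
  hby : ∀ i, b⁻¹ * (y i)⁻¹ * b * y i = z i * y i
  hbz : ∀ i, b⁻¹ * (z i)⁻¹ * b * z i = y i * z i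
  hba : b⁻¹ * a⁻¹ * b * a = a ^ 2

variable {G : Type*} [Group G] [Fintype G]

/-- The subgroup `P = ⟨x, y₁, …, y_r, z₁, …, z_r⟩` of `G`. -/
def GData.P (d : GData G) : Subgroup G :=
  Subgroup.closure (({d.x} : Set G) ∪ Set.range d.y ∪ Set.range d.z)

end Paper

/-!
Put `t = a^{2^{n-2}}`. As `H/K` is cyclic, `K` contains the commutators `x = [yᵢ,zᵢ]` and
`zᵢyᵢ = [b,yᵢ]`; as `K ≠ P, H`, it does not contain `P`, so for `p ∤ c` (the `yᵢ` having order
`p`) the powers `yᵢ^c` do not all lie in `K`. Every element of `G` is `u a^j b^m` with `u ∈ P`, and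
`a^{-j} (zᵢyᵢ) a^j = zᵢ^{q^j} yᵢ^{k^j} ≡ yᵢ^{k^j - q^j}` modulo `K`; hence `a^j` normalizes `K`
only if `k^j ≡ q^j`, i.e. `2^{n-2} ∣ j`. Conversely `t` inverts `yᵢ, zᵢ` and centralizes `x, b`,
so it acts on `H/K` as inversion and normalizes `K`: `N_G(K) = ⟨H, t⟩`. Likewise `a^j` commutes
with all `yᵢ` modulo `K` only if `k^j ≡ 1`, i.e. `a^j = 1`, which gives maximality of `H/K`.
For `g ∉ N_G(K)` the same computation yields `v ∈ H \ K` with `g v g⁻¹ ∈ K`; a minimal normal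
subgroup `L` of `H` over `K` inside `K⟨v⟩` then gives a factor `K̂ - L̂` of `ε(H,K)` that
annihilates `g⁻¹ K̂ g`, whence `ε(H,K) · g⁻¹ ε(H,K) g = 0`.
-/

namespace Paper

section GroupTheory

variable {G : Type*} [Group G]

theorem conj_eq_mul_inv_of_commutator_eq {u v w : G} (h : u⁻¹ * v⁻¹ * u * v = w) :
    u⁻¹ * v * u = v * w⁻¹ := by
  rw [← h]; group

theorem inv_pow_mul_mul_pow_eq_pow_pow {c y : G} {k : ℕ} (h : c⁻¹ * y * c = y ^ k) (j : ℕ) :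
    (c ^ j)⁻¹ * y * c ^ j = y ^ k ^ j := by
  induction j with
  | zero => simp
  | succ j ih =>
    calc (c ^ (j + 1))⁻¹ * y * c ^ (j + 1) = c⁻¹ * ((c ^ j)⁻¹ * y * c ^ j) * c := by group
      _ = (c⁻¹ * y * c) ^ k ^ j := by simpa [ih] using (conj_pow (a := c⁻¹) (b := y)).symm
      _ = y ^ k ^ (j + 1) := by rw [h, ← pow_mul, pow_succ']

theorem mem_of_zpow_mem_of_not_dvd {K : Subgroup G} {g : G} {p : ℕ} (hp : p.Prime)
    (hg : g ^ p = 1) {c : ℤ} (hc : ¬ (p : ℤ) ∣ c) (h : g ^ c ∈ K) : g ∈ K := by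
  obtain ⟨s, t, hst⟩ := (Nat.prime_iff_prime_int.mp hp).coprime_iff_not_dvd.mpr hc
  have hgp : g ^ (p : ℤ) = 1 := by rw [zpow_natCast, hg]
  have : g = (g ^ c) ^ t := by
    calc g = g ^ (s * p + t * c) := by rw [hst, zpow_one]
      _ = (g ^ c) ^ t := by rw [zpow_add, mul_comm s, zpow_mul, hgp, one_zpow, one_mul,
          mul_comm, zpow_mul]
  rw [this]
  exact zpow_mem h t

theorem zpow_eq_zpow_of_intCast_eq {g : G} {p : ℕ} (hg : g ^ p = 1) {m m' : ℤ}
    (h : (m : ZMod p) = m') : g ^ m = g ^ m' :=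
  zpow_eq_zpow_iff_modEq.mpr <|
    ((ZMod.intCast_eq_intCast_iff _ _ _).mp h).of_dvd (Int.natCast_dvd_natCast.mpr
      (orderOf_dvd_of_pow_eq_one hg))

/-- `H/K` is abelian, stated elementwise as in `IsStrongShodaPair`. -/
def AbelianQuot (H K : Subgroup G) : Prop :=
  ∀ h₁ ∈ H, ∀ h₂ ∈ H, h₁⁻¹ * h₂⁻¹ * h₁ * h₂ ∈ K

variable {H K : Subgroup G}

theorem CyclicQuot.abelianQuot (hnorm : NormalIn H K) (hcyc : CyclicQuot H K) :
    AbelianQuot H K := by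
  obtain ⟨h, hh, hgen⟩ := hcyc
  intro h₁ hh₁ h₂ hh₂
  obtain ⟨m₁, hm₁⟩ := hgen h₁ hh₁
  obtain ⟨m₂, hm₂⟩ := hgen h₂ hh₂
  obtain ⟨κ₁, hκ₁, rfl⟩ : ∃ κ ∈ K, h₁ = h ^ m₁ * κ := ⟨_, hm₁, by group⟩
  obtain ⟨κ₂, hκ₂, rfl⟩ : ∃ κ ∈ K, h₂ = h ^ m₂ * κ := ⟨_, hm₂, by group⟩
  have hid : (h ^ m₁ * κ₁)⁻¹ * (h ^ m₂ * κ₂)⁻¹ * (h ^ m₁ * κ₁) * (h ^ m₂ * κ₂) =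
      κ₁⁻¹ * ((h ^ m₁)⁻¹ * κ₂⁻¹ * h ^ m₁) * ((h ^ m₂)⁻¹ * κ₁ * h ^ m₂) * κ₂ := by
    group
  rw [hid]
  exact mul_mem (mul_mem (mul_mem (inv_mem hκ₁) (hnorm _ (zpow_mem hh m₁) _ (inv_mem hκ₂)))
    (hnorm _ (zpow_mem hh m₂) _ hκ₁)) hκ₂

theorem NormalIn.le_normalizer (hnorm : NormalIn H K) : H ≤ Subgroup.normalizer (K : Set G) := by
  intro g hg
  refine Subgroup.mem_normalizer_iff.mpr fun h => ⟨fun hh => ?_, fun hh => ?_⟩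
  · simpa using hnorm g⁻¹ (inv_mem hg) h hh
  · simpa [mul_assoc] using hnorm g hg _ hh

theorem AbelianQuot.normalIn_of_le (hab : AbelianQuot H K) {J : Subgroup G} (hKJ : K ≤ J)
    (hJH : J ≤ H) : NormalIn H J := by
  intro h hh l hl
  have : h⁻¹ * l * h = l * (l⁻¹ * h⁻¹ * l * h) := by group
  rw [this]
  exact mul_mem hl (hKJ (hab l (hJH hl) h hh))

theorem zpow_mul_zpow_mem_of_mul_mem (hnorm : NormalIn H K) {u v : G} (hv : v ∈ H)
    (huv : u * v ∈ K) (m : ℤ) : u ^ m * v ^ m ∈ K := by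
  have hvu : v * u ∈ K := by simpa [mul_assoc] using hnorm v⁻¹ (inv_mem hv) _ huv
  induction m using Int.induction_on with
  | zero => simp
  | succ m ih =>
    have : u ^ (m + 1 : ℤ) * v ^ (m + 1 : ℤ) =
        u ^ (m : ℤ) * v ^ (m : ℤ) * ((v ^ (m : ℤ))⁻¹ * (u * v) * v ^ (m : ℤ)) := by group
    rw [this]
    exact mul_mem ih (hnorm _ (zpow_mem hv _) _ huv)
  | pred m ih =>
    have : u ^ (-(m : ℤ) - 1) * v ^ (-(m : ℤ) - 1) =
        u ^ (-(m : ℤ)) * v ^ (-(m : ℤ)) *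
          ((v ^ (-(m : ℤ)))⁻¹ * (v * u)⁻¹ * v ^ (-(m : ℤ))) := by
      group
    rw [this]
    exact mul_mem ih (hnorm _ (zpow_mem hv _) _ (inv_mem hvu))

section Finite

variable [Finite G]

theorem mem_normalizer_closure_of_conj_mem {S : Set G} {c : G}
    (h : ∀ s ∈ S, c⁻¹ * s * c ∈ Subgroup.closure S) :
    c ∈ Subgroup.normalizer (Subgroup.closure S : Set G) := by
  refine inv_mem_iff.mp (Subgroup.mem_normalizer_fintype fun g hg => ?_)
  have hle : Subgroup.closure S ≤ (Subgroup.closure S).comap (MulAut.conj c⁻¹).toMonoidHom :=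
    (Subgroup.closure_le _).mpr fun s hs => by simpa using h s hs
  exact hle hg

theorem mem_normalizer_of_conj_mul_mem {S : Set G} (hH : Subgroup.closure S = H) (hKH : K ≤ H)
    (hnorm : NormalIn H K) (hab : AbelianQuot H K) {c : G}
    (hS : ∀ s ∈ S, c⁻¹ * s * c * s ∈ K) :
    c ∈ Subgroup.normalizer (K : Set G) := by
  -- `c` acts on the generators, hence on all of `H`, as inversion modulo `K`: since `H/K` is
  -- abelian, inversion is an endomorphism of it
  have key : ∀ g ∈ H, c⁻¹ * g * c * g ∈ K := by
    intro g hg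
    rw [← hH] at hg
    induction hg using Subgroup.closure_induction with
    | mem s hs => exact hS s hs
    | one => simp
    | mul g₁ g₂ hg₁ hg₂ ih₁ ih₂ =>
      rw [hH] at hg₁ hg₂
      have : c⁻¹ * (g₁ * g₂) * c * (g₁ * g₂) = (c⁻¹ * g₁ * c * g₁) *
          (g₁⁻¹ * (c⁻¹ * g₂ * c * g₂) * g₁) * (g₁⁻¹ * g₂⁻¹ * g₁ * g₂) := by group
      rw [this]
      exact mul_mem (mul_mem ih₁ (hnorm _ hg₁ _ ih₂)) (hab _ hg₁ _ hg₂)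
    | inv g hg ih =>
      rw [hH] at hg
      have : c⁻¹ * g⁻¹ * c * g⁻¹ = g * (c⁻¹ * g * c * g)⁻¹ * g⁻¹ := by group
      rw [this]
      simpa using hnorm g⁻¹ (inv_mem hg) _ (inv_mem ih)
  refine inv_mem_iff.mp (Subgroup.mem_normalizer_fintype fun κ hκ => ?_)
  have : c⁻¹ * κ * c⁻¹⁻¹ = (c⁻¹ * κ * c * κ) * κ⁻¹ := by group
  rw [this]
  exact mul_mem (key κ (hKH hκ)) (inv_mem hκ)

end Finite

end GroupTheory

section GroupAlgebra

open MonoidAlgebra Pointwise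

variable {G : Type*} [Group G] [Fintype G]

theorem inv_card_smul_sum_const (M : Subgroup G) (X : MonoidAlgebra ℚ G) :
    (Nat.card M : ℚ)⁻¹ • ∑ _m : M, X = X := by
  rw [Finset.sum_const, Finset.card_univ, ← Nat.card_eq_fintype_card,
    ← Nat.cast_smul_eq_nsmul ℚ, smul_smul,
    inv_mul_cancel₀ (Nat.cast_ne_zero.mpr Nat.card_pos.ne'), one_smul]

theorem hat_mul (M : Subgroup G) (X : MonoidAlgebra ℚ G) :
    hat M * X = (Nat.card M : ℚ)⁻¹ • ∑ m : M, of ℚ G m * X := by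
  rw [hat, smul_mul_assoc, Finset.sum_mul]

theorem mul_hat (M : Subgroup G) (X : MonoidAlgebra ℚ G) :
    X * hat M = (Nat.card M : ℚ)⁻¹ • ∑ m : M, X * of ℚ G m := by
  rw [hat, mul_smul_comm, Finset.mul_sum]

theorem hat_mul_of_mem {M : Subgroup G} {g : G} (hg : g ∈ M) : hat M * of ℚ G g = hat M := by
  rw [hat_mul, hat]
  congr 1
  exact Fintype.sum_equiv (Equiv.mulRight ⟨g, hg⟩) _ _ fun m => (map_mul _ _ _).symm

theorem of_mul_hat_of_mem {M : Subgroup G} {g : G} (hg : g ∈ M) : of ℚ G g * hat M = hat M := by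
  rw [mul_hat, hat]
  congr 1
  exact Fintype.sum_equiv (Equiv.mulLeft ⟨g, hg⟩) _ _ fun m => (map_mul _ _ _).symm

theorem hat_mul_hat_of_le {M M' : Subgroup G} (h : M ≤ M') : hat M * hat M' = hat M' := by
  rw [hat_mul]
  simp_rw [of_mul_hat_of_mem (h (Subtype.prop _))]
  exact inv_card_smul_sum_const M _

theorem hat_mul_hat_of_le' {M M' : Subgroup G} (h : M ≤ M') : hat M' * hat M = hat M' := by
  rw [mul_hat]
  simp_rw [hat_mul_of_mem (h (Subtype.prop _))]
  exact inv_card_smul_sum_const M _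

theorem commute_of_hat_of_mem_normalizer {M : Subgroup G} {g : G}
    (hg : g ∈ Subgroup.normalizer (M : Set G)) : Commute (of ℚ G g) (hat M) := by
  let e : M ≃ M :=
    (MulAut.conj g).toEquiv.subtypeEquiv fun m => Subgroup.mem_normalizer_iff.mp hg m
  rw [Commute, SemiconjBy, hat, mul_smul_comm, smul_mul_assoc, Finset.mul_sum, Finset.sum_mul]
  congr 1
  refine Fintype.sum_equiv e _ _ fun m => ?_
  simp only [e, Equiv.subtypeEquiv_apply, MulEquiv.toEquiv_eq_coe, MulEquiv.coe_toEquiv,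
    MulAut.conj_apply, ← map_mul]
  congr 1
  group

theorem commute_hat_hat_of_le_normalizer {M M' : Subgroup G}
    (h : M' ≤ Subgroup.normalizer (M : Set G)) : Commute (hat M') (hat M) :=
  (Commute.sum_left _ _ _ fun m _ => commute_of_hat_of_mem_normalizer (h m.2)).smul_left _

variable {H K L : Subgroup G}

theorem commute_sub_hat {L' : Subgroup G} (hL : NormalOver H K L) (hL' : NormalOver H K L') :
    Commute (hat K - hat L) (hat K - hat L') := by
  have hLL' : hat L * hat L' = hat L' * hat L :=
    (commute_hat_hat_of_le_normalizer (hL'.1.trans (NormalIn.le_normalizer hL.2.2))).eq.symm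
  simp only [Commute, SemiconjBy, sub_mul, mul_sub, hat_mul_hat_of_le le_rfl,
    hat_mul_hat_of_le hL.2.1.le, hat_mul_hat_of_le hL'.2.1.le, hat_mul_hat_of_le' hL.2.1.le,
    hat_mul_hat_of_le' hL'.2.1.le, hLL']
  abel

theorem exists_minimalOver_le {J : Subgroup G} (hJ : NormalOver H K J) :
    ∃ L ≤ J, MinimalOver H K L := by
  obtain ⟨L, hLJ, hL, hmin⟩ := exists_minimal_le_of_wellFoundedLT (NormalOver H K) J hJ
  exact ⟨L, hLJ, hL, fun L' hL' hle => le_antisymm hle (hmin hL' hle)⟩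

theorem eps_eq_sub_hat_mul (hne : H ≠ K) (hL : MinimalOver H K L) :
    ∃ R, Commute (hat K - hat L) R ∧ eps H K = (hat K - hat L) * R := by
  set l := ({L' : Subgroup G | MinimalOver H K L'}.toFinset).toList
  have hmin : ∀ L' ∈ l, MinimalOver H K L' := by simp [l]
  have hLl : L ∈ l := by simpa [l] using hL
  refine ⟨((l.erase L).map fun L' => hat K - hat L').prod, ?_, ?_⟩
  · refine Commute.list_prod_right _ _ fun f hf => ?_
    obtain ⟨L', hL', rfl⟩ := List.mem_map.mp hf
    exact commute_sub_hat hL.1 (hmin L' (List.mem_of_mem_erase hL')).1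
  · have hpair : (l.map fun L' => hat K - hat L').Pairwise Commute :=
      List.pairwise_of_forall_mem_list fun f hf f' hf' => by
        obtain ⟨L₁, hL₁, rfl⟩ := List.mem_map.mp hf
        obtain ⟨L₂, hL₂, rfl⟩ := List.mem_map.mp hf'
        exact commute_sub_hat (hmin L₁ hL₁).1 (hmin L₂ hL₂).1
    rw [eps, if_neg hne, List.Perm.prod_eq' ((List.perm_cons_erase hLl).map _) hpair]
    rfl

theorem sub_hat_mul_conj_hat_eq_zero {V : Subgroup G} {g : G} (hKL : K ≤ L) (hLV : L ≤ K ⊔ V)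
    (hV : V ≤ Subgroup.normalizer (K : Set G)) (hgV : ∀ w ∈ V, g * w * g⁻¹ ∈ K) :
    (hat K - hat L) * (of ℚ G g⁻¹ * hat K * of ℚ G g) = 0 := by
  set X := of ℚ G g⁻¹ * hat K * of ℚ G g
  have hVX : ∀ w ∈ V, of ℚ G w * X = X := fun w hw => by
    have : of ℚ G w * of ℚ G g⁻¹ = of ℚ G g⁻¹ * of ℚ G (g * w * g⁻¹) := by
      simp only [← map_mul]; group
    simp only [X, ← mul_assoc, this]
    rw [mul_assoc _ (of ℚ G _), of_mul_hat_of_mem (hgV w hw)]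
  have hLX : ∀ l ∈ L, hat K * (of ℚ G l * X) = hat K * X := fun l hl => by
    obtain ⟨κ, hκ, w, hw, rfl⟩ : l ∈ (K : Set G) * (V : Set G) := by
      rw [← Subgroup.coe_mul_of_right_le_normalizer_left K V hV]; exact hLV hl
    rw [map_mul, mul_assoc, hVX w hw, ← mul_assoc, hat_mul_of_mem hκ]
  rw [sub_mul, ← hat_mul_hat_of_le hKL, mul_assoc, hat_mul L X, mul_smul_comm, Finset.mul_sum]
  simp_rw [hLX _ (Subtype.prop _)]
  rw [inv_card_smul_sum_const, sub_self]

theorem eps_mul_conj_eps_eq_zero (hKH : K ≤ H) (hnorm : NormalIn H K) (hab : AbelianQuot H K)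
    {g v : G} (hvH : v ∈ H) (hvK : v ∉ K) (hgv : g * v * g⁻¹ ∈ K) :
    eps H K * (of ℚ G g⁻¹ * eps H K * of ℚ G g) = 0 := by
  have hJH : K ⊔ Subgroup.zpowers v ≤ H := sup_le hKH (Subgroup.zpowers_le.mpr hvH)
  have hJ : NormalOver H K (K ⊔ Subgroup.zpowers v) :=
    ⟨hJH, lt_of_le_of_ne le_sup_left fun h => hvK <| by
      rw [h]; exact Subgroup.mem_sup_right (Subgroup.mem_zpowers v),
      hab.normalIn_of_le le_sup_left hJH⟩
  obtain ⟨L, hLJ, hL⟩ := exists_minimalOver_le hJ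
  obtain ⟨R, hRc, hR⟩ := eps_eq_sub_hat_mul (fun h : H = K => hvK (h ▸ hvH)) hL
  have hkill : (hat K - hat L) * (of ℚ G g⁻¹ * hat K * of ℚ G g) = 0 := by
    refine sub_hat_mul_conj_hat_eq_zero hL.1.2.1.le hLJ
      (Subgroup.zpowers_le.mpr (NormalIn.le_normalizer hnorm hvH)) fun w hw => ?_
    obtain ⟨s, rfl⟩ := Subgroup.mem_zpowers_iff.mp hw
    simpa only [conj_zpow] using zpow_mem hgv s
  have hKf : hat K * (hat K - hat L) = hat K - hat L := by
    rw [mul_sub, hat_mul_hat_of_le le_rfl, hat_mul_hat_of_le hL.1.2.1.le]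
  have hconj : of ℚ G g⁻¹ * eps H K * of ℚ G g =
      (of ℚ G g⁻¹ * hat K * of ℚ G g) * (of ℚ G g⁻¹ * ((hat K - hat L) * R) * of ℚ G g) := by
    have hgg : of ℚ G g * of ℚ G g⁻¹ = 1 := by rw [← map_mul, mul_inv_cancel, map_one]
    conv_lhs => rw [hR, ← hKf]
    simp only [mul_assoc]
    rw [← mul_assoc (of ℚ G g) (of ℚ G g⁻¹), hgg, one_mul]
  rw [hconj, ← mul_assoc, hR, hRc.eq, mul_assoc R, hkill, mul_zero, zero_mul]

end GroupAlgebra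

end Paper

namespace Paper.GData

open Subgroup Pointwise

variable {G : Type*} [Group G] [Fintype G] (d : GData G)

def H : Subgroup G := d.P ⊔ closure {d.b}

def t : G := d.a ^ 2 ^ (d.n - 2)

theorem conj_x_a : d.a⁻¹ * d.x * d.a = d.x := by
  rw [conj_eq_mul_inv_of_commutator_eq d.hax, inv_one, mul_one]

theorem conj_y_a (i : Fin d.r) : d.a⁻¹ * d.y i * d.a = d.y i ^ d.k := by
  rw [conj_eq_mul_inv_of_commutator_eq (d.hay i), ← zpow_natCast, ← zpow_neg, ← zpow_one_add]
  congr 1; ring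

theorem conj_z_a (i : Fin d.r) : d.a⁻¹ * d.z i * d.a = d.z i ^ d.q := by
  rw [conj_eq_mul_inv_of_commutator_eq (d.haz i), ← zpow_natCast, ← zpow_neg, ← zpow_one_add]
  congr 1; ring

theorem conj_x_b : d.b⁻¹ * d.x * d.b = d.x⁻¹ := by
  rw [conj_eq_mul_inv_of_commutator_eq d.hbx]; group

theorem conj_y_b (i : Fin d.r) : d.b⁻¹ * d.y i * d.b = (d.z i)⁻¹ := by
  rw [conj_eq_mul_inv_of_commutator_eq (d.hby i)]; group

theorem conj_z_b (i : Fin d.r) : d.b⁻¹ * d.z i * d.b = (d.y i)⁻¹ := by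
  rw [conj_eq_mul_inv_of_commutator_eq (d.hbz i)]; group

theorem conj_a_b : d.b⁻¹ * d.a * d.b = d.a⁻¹ := by
  rw [conj_eq_mul_inv_of_commutator_eq d.hba]; group

theorem conj_y_pow_a (i : Fin d.r) (j : ℕ) : (d.a ^ j)⁻¹ * d.y i * d.a ^ j = d.y i ^ d.k ^ j :=
  inv_pow_mul_mul_pow_eq_pow_pow (d.conj_y_a i) j

theorem conj_z_pow_a (i : Fin d.r) (j : ℕ) : (d.a ^ j)⁻¹ * d.z i * d.a ^ j = d.z i ^ d.q ^ j :=
  inv_pow_mul_mul_pow_eq_pow_pow (d.conj_z_a i) j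

theorem zpow_b_eq_one_or_eq (m : ℤ) : d.b ^ m = 1 ∨ d.b ^ m = d.b := by
  have hb2 : d.b ^ (2 : ℤ) = 1 := by exact_mod_cast d.hb2
  obtain ⟨s, rfl | rfl⟩ := Int.even_or_odd' m
  · left; rw [zpow_mul, hb2, one_zpow]
  · right; rw [zpow_add_one, zpow_mul, hb2, one_zpow, one_mul]

theorem k_pow_two_pow_sub_two : (d.k : ZMod d.p) ^ 2 ^ (d.n - 2) = -1 := by
  have := Fact.mk d.hp
  have hn : d.n - 2 + 1 = d.n - 1 := by have := d.hn; omega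
  have hsq : (d.k : ZMod d.p) ^ 2 ^ (d.n - 2) * (d.k : ZMod d.p) ^ 2 ^ (d.n - 2) = 1 := by
    rw [← pow_add, ← two_mul, ← pow_succ', hn, ← d.hordk, pow_orderOf_eq_one]
  refine (mul_self_eq_one_iff.mp hsq).resolve_left fun h => ?_
  have hle := Nat.le_of_dvd (by positivity) (d.hordk ▸ orderOf_dvd_of_pow_eq_one h)
  have hlt : 2 ^ (d.n - 2) < 2 ^ (d.n - 1) := Nat.pow_lt_pow_right (by norm_num) (by omega)
  omega

theorem q_pow_two_pow_sub_two : (d.q : ZMod d.p) ^ 2 ^ (d.n - 2) = -1 := by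
  have := Fact.mk d.hp
  rw [eq_inv_of_mul_eq_one_right d.hkq, inv_pow, k_pow_two_pow_sub_two, inv_neg_one]

theorem two_pow_dvd_of_k_pow_eq_q_pow {j : ℕ}
    (h : (d.k : ZMod d.p) ^ j = (d.q : ZMod d.p) ^ j) : 2 ^ (d.n - 2) ∣ j := by
  have hk : (d.k : ZMod d.p) ^ (j * 2) = 1 := by
    rw [pow_mul, sq]; nth_rewrite 2 [h]; rw [← mul_pow, d.hkq, one_pow]
  have hdvd := d.hordk ▸ orderOf_dvd_of_pow_eq_one hk
  rw [show d.n - 1 = d.n - 2 + 1 by have := d.hn; omega, pow_succ] at hdvd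
  exact Nat.dvd_of_mul_dvd_mul_right two_pos hdvd

theorem pow_a_eq_one_of_k_pow_eq_one {j : ℕ} (h : (d.k : ZMod d.p) ^ j = 1) : d.a ^ j = 1 := by
  obtain ⟨s, rfl⟩ := d.hordk ▸ orderOf_dvd_of_pow_eq_one h
  rw [pow_mul, d.han, one_pow]

theorem pow_a_mem_closure_t_of_dvd {j : ℕ} (h : 2 ^ (d.n - 2) ∣ j) :
    d.a ^ j ∈ closure {d.t} := by
  obtain ⟨s, rfl⟩ := h
  rw [pow_mul]
  exact pow_mem (subset_closure (Set.mem_singleton _)) s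

theorem x_mem_P : d.x ∈ d.P := subset_closure (by simp)

theorem y_mem_P (i : Fin d.r) : d.y i ∈ d.P := subset_closure (by simp)

theorem z_mem_P (i : Fin d.r) : d.z i ∈ d.P := subset_closure (by simp)

theorem P_le_H : d.P ≤ d.H := le_sup_left

theorem b_mem_H : d.b ∈ d.H := mem_sup_right (subset_closure (Set.mem_singleton _))

theorem a_mem_normalizer_P : d.a ∈ normalizer (d.P : Set G) := by
  refine mem_normalizer_closure_of_conj_mem ?_
  rintro s ((rfl | ⟨i, rfl⟩) | ⟨i, rfl⟩)
  · rw [conj_x_a]; exact d.x_mem_P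
  · rw [conj_y_a]; exact pow_mem (d.y_mem_P i) _
  · rw [conj_z_a]; exact pow_mem (d.z_mem_P i) _

theorem b_mem_normalizer_P : d.b ∈ normalizer (d.P : Set G) := by
  refine mem_normalizer_closure_of_conj_mem ?_
  rintro s ((rfl | ⟨i, rfl⟩) | ⟨i, rfl⟩)
  · rw [conj_x_b]; exact inv_mem d.x_mem_P
  · rw [conj_y_b]; exact inv_mem (d.z_mem_P i)
  · rw [conj_z_b]; exact inv_mem (d.y_mem_P i)

theorem normal_P : d.P.Normal := by
  rw [← normalizer_eq_top_iff, eq_top_iff, ← d.hgen, closure_le]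
  rintro s (((rfl | rfl | rfl) | ⟨i, rfl⟩) | ⟨i, rfl⟩)
  · exact le_normalizer d.x_mem_P
  · exact d.a_mem_normalizer_P
  · exact d.b_mem_normalizer_P
  · exact le_normalizer (d.y_mem_P i)
  · exact le_normalizer (d.z_mem_P i)

theorem exists_eq_mul_zpow_b_of_mem_H {g : G} (hg : g ∈ d.H) :
    ∃ u ∈ d.P, ∃ m : ℤ, g = u * d.b ^ m := by
  have := d.normal_P
  obtain ⟨u, hu, w, hw, rfl⟩ : g ∈ (d.P : Set G) * (zpowers d.b : Set G) := by
    rw [← normal_mul, zpowers_eq_closure]; exact hg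
  obtain ⟨m, rfl⟩ := mem_zpowers_iff.mp hw
  exact ⟨u, hu, m, rfl⟩

theorem exists_eq_mul_pow_a_zpow_b (g : G) :
    ∃ u ∈ d.P, ∃ j : ℕ, ∃ m : ℤ, g = u * d.a ^ j * d.b ^ m := by
  have := d.normal_P
  have hPa : d.P ⊔ zpowers d.a = closure (({d.x} ∪ Set.range d.y ∪ Set.range d.z) ∪ {d.a}) := by
    rw [Subgroup.closure_union, zpowers_eq_closure]; rfl
  have hb : zpowers d.b ≤ normalizer ((d.P ⊔ zpowers d.a : Subgroup G) : Set G) := by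
    rw [zpowers_le, hPa]
    refine mem_normalizer_closure_of_conj_mem ?_
    rintro s (hs | rfl)
    · exact closure_mono Set.subset_union_left
        ((mem_normalizer_iff''.mp d.b_mem_normalizer_P s).mp (subset_closure hs))
    · rw [conj_a_b]; exact inv_mem (subset_closure (Set.mem_union_right _ rfl))
  have htop : (⊤ : Subgroup G) ≤ d.P ⊔ zpowers d.a ⊔ zpowers d.b := by
    rw [← d.hgen, closure_le]
    rintro s (((rfl | rfl | rfl) | ⟨i, rfl⟩) | ⟨i, rfl⟩)
    · exact mem_sup_left (mem_sup_left d.x_mem_P)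
    · exact mem_sup_left (mem_sup_right (mem_zpowers _))
    · exact mem_sup_right (mem_zpowers _)
    · exact mem_sup_left (mem_sup_left (d.y_mem_P i))
    · exact mem_sup_left (mem_sup_left (d.z_mem_P i))
  obtain ⟨v, hv, w, hw, rfl⟩ :
      g ∈ ((d.P ⊔ zpowers d.a : Subgroup G) : Set G) * (zpowers d.b : Set G) := by
    rw [← coe_mul_of_right_le_normalizer_left _ _ hb]; exact htop (mem_top g)
  obtain ⟨u, hu, c, hc, rfl⟩ : v ∈ (d.P : Set G) * (zpowers d.a : Set G) := by
    rw [← normal_mul]; exact hv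
  obtain ⟨j, rfl⟩ := (mem_powers_iff_mem_zpowers.mpr hc)
  obtain ⟨m, rfl⟩ := mem_zpowers_iff.mp hw
  exact ⟨u, hu, j, m, rfl⟩

theorem H_eq_closure : d.H = closure (({d.x} ∪ Set.range d.y ∪ Set.range d.z) ∪ {d.b}) := by
  rw [Subgroup.closure_union]; rfl

theorem t_inv : d.t⁻¹ = d.t := by
  refine inv_eq_of_mul_eq_one_right ?_
  rw [t, ← pow_add, ← two_mul, ← pow_succ', show d.n - 2 + 1 = d.n - 1 by have := d.hn; omega,
    d.han]

theorem conj_x_t : d.t⁻¹ * d.x * d.t = d.x := by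
  rw [t]
  simpa using inv_pow_mul_mul_pow_eq_pow_pow (k := 1) (by simpa using d.conj_x_a) (2 ^ (d.n - 2))

theorem conj_y_t (i : Fin d.r) : d.t⁻¹ * d.y i * d.t = (d.y i)⁻¹ := by
  rw [t, conj_y_pow_a, ← zpow_natCast, ← zpow_neg_one]
  exact zpow_eq_zpow_of_intCast_eq (d.hyp i) (by push_cast; exact d.k_pow_two_pow_sub_two)

theorem conj_z_t (i : Fin d.r) : d.t⁻¹ * d.z i * d.t = (d.z i)⁻¹ := by
  rw [t, conj_z_pow_a, ← zpow_natCast, ← zpow_neg_one]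
  exact zpow_eq_zpow_of_intCast_eq (d.hzp i) (by push_cast; exact d.q_pow_two_pow_sub_two)

theorem conj_b_t : d.t⁻¹ * d.b * d.t = d.b := by
  have h : d.b⁻¹ * d.t * d.b = d.t := by
    have := conj_pow (a := d.b⁻¹) (b := d.a) (i := 2 ^ (d.n - 2))
    rw [inv_inv, conj_a_b, inv_pow] at this
    rw [t, ← this, ← t, t_inv]
  calc d.t⁻¹ * d.b * d.t = d.t⁻¹ * d.b * (d.b⁻¹ * d.t * d.b) := by rw [h]
    _ = d.b := by group

theorem t_mem_normalizer_H : d.t ∈ normalizer (d.H : Set G) := by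
  rw [H_eq_closure]
  refine mem_normalizer_closure_of_conj_mem ?_
  rw [← H_eq_closure]
  rintro s (((rfl | ⟨i, rfl⟩) | ⟨i, rfl⟩) | rfl)
  · rw [conj_x_t]; exact d.P_le_H d.x_mem_P
  · rw [conj_y_t]; exact inv_mem (d.P_le_H (d.y_mem_P i))
  · rw [conj_z_t]; exact inv_mem (d.P_le_H (d.z_mem_P i))
  · rw [conj_b_t]; exact d.b_mem_H

structure Admissible (K : Subgroup G) : Prop where
  le_H : K ≤ d.H
  normalIn : NormalIn d.H K
  abelianQuot : AbelianQuot d.H K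
  not_P_le : ¬ d.P ≤ K

variable {d} {K : Subgroup G}

theorem Admissible.of_cyclicQuot (hKH : K ≤ d.H) (hnorm : NormalIn d.H K) (hKne : K ≠ d.H)
    (hKP : K ≠ d.P) (hcyc : CyclicQuot d.H K) : d.Admissible K where
  le_H := hKH
  normalIn := hnorm
  abelianQuot := hcyc.abelianQuot hnorm
  not_P_le hPK := by
    have hbK : d.b ∉ K := fun hb =>
      hKne (le_antisymm hKH (sup_le hPK ((closure_le _).mpr (Set.singleton_subset_iff.mpr hb))))
    refine hKP (le_antisymm (fun κ hκ => ?_) hPK)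
    obtain ⟨u, hu, m, rfl⟩ := d.exists_eq_mul_zpow_b_of_mem_H (hKH hκ)
    have hbm : d.b ^ m ∈ K := (mul_mem_cancel_left (hPK hu)).mp hκ
    rcases d.zpow_b_eq_one_or_eq m with h | h
    · rwa [h, mul_one]
    · exact absurd (h ▸ hbm) hbK

namespace Admissible

theorem x_mem (hK : d.Admissible K) : d.x ∈ K := by
  obtain ⟨i⟩ : Nonempty (Fin d.r) := ⟨⟨0, d.hr⟩⟩
  simpa only [d.hyz i] using hK.abelianQuot _ (d.P_le_H (d.y_mem_P i)) _ (d.P_le_H (d.z_mem_P i))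

theorem z_mul_y_mem (hK : d.Admissible K) (i : Fin d.r) : d.z i * d.y i ∈ K := by
  simpa only [d.hby i] using hK.abelianQuot _ d.b_mem_H _ (d.P_le_H (d.y_mem_P i))

theorem not_forall_y_zpow_mem (hK : d.Admissible K) {c : ℤ} (hc : ¬ (d.p : ℤ) ∣ c) :
    ¬ ∀ i, d.y i ^ c ∈ K := by
  intro h
  have hy : ∀ i, d.y i ∈ K := fun i => mem_of_zpow_mem_of_not_dvd d.hp (d.hyp i) hc (h i)
  refine hK.not_P_le ((closure_le _).mpr ?_)
  rintro s ((rfl | ⟨i, rfl⟩) | ⟨i, rfl⟩)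
  · exact hK.x_mem
  · exact hy i
  · exact (mul_mem_cancel_right (hy i)).mp (hK.z_mul_y_mem i)

theorem t_mem_normalizer (hK : d.Admissible K) : d.t ∈ normalizer (K : Set G) := by
  refine mem_normalizer_of_conj_mul_mem d.H_eq_closure.symm hK.le_H hK.normalIn hK.abelianQuot ?_
  rintro s (((rfl | ⟨i, rfl⟩) | ⟨i, rfl⟩) | rfl)
  · rw [conj_x_t]; exact mul_mem hK.x_mem hK.x_mem
  · rw [conj_y_t, inv_mul_cancel]; exact one_mem K
  · rw [conj_z_t, inv_mul_cancel]; exact one_mem K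
  · rw [conj_b_t, ← sq, d.hb2]; exact one_mem K

theorem sup_closure_t_le_normalizer (hK : d.Admissible K) :
    d.H ⊔ closure {d.t} ≤ normalizer (K : Set G) :=
  sup_le hK.normalIn.le_normalizer
    ((closure_le _).mpr (Set.singleton_subset_iff.mpr hK.t_mem_normalizer))

theorem mem_normalizer_iff_pow_a_mem (hK : d.Admissible K) {u : G} (hu : u ∈ d.P) (j : ℕ)
    (m : ℤ) : u * d.a ^ j * d.b ^ m ∈ normalizer (K : Set G) ↔
      d.a ^ j ∈ normalizer (K : Set G) :=
  (mul_mem_cancel_right (zpow_mem (hK.normalIn.le_normalizer d.b_mem_H) m)).trans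
    (mul_mem_cancel_left (hK.normalIn.le_normalizer (d.P_le_H hu)))

theorem two_pow_dvd_of_forall_conj_mem (hK : d.Admissible K) (j : ℕ)
    (h : ∀ i, (d.a ^ j)⁻¹ * (d.z i * d.y i) * d.a ^ j ∈ K) : 2 ^ (d.n - 2) ∣ j := by
  refine d.two_pow_dvd_of_k_pow_eq_q_pow (by_contra fun hne => ?_)
  refine hK.not_forall_y_zpow_mem (c := ((d.k ^ j : ℕ) : ℤ) - ((d.q ^ j : ℕ) : ℤ)) ?_ fun i => ?_
  · rw [← ZMod.intCast_zmod_eq_zero_iff_dvd]; push_cast; exact sub_ne_zero.mpr hne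
  · have hconj : (d.a ^ j)⁻¹ * (d.z i * d.y i) * d.a ^ j =
        d.z i ^ ((d.q ^ j : ℕ) : ℤ) * d.y i ^ ((d.k ^ j : ℕ) : ℤ) := by
      rw [zpow_natCast, zpow_natCast, ← conj_z_pow_a, ← conj_y_pow_a]; group
    have hzy := zpow_mul_zpow_mem_of_mul_mem hK.normalIn (d.P_le_H (d.y_mem_P i))
      (hK.z_mul_y_mem i) ((d.q ^ j : ℕ) : ℤ)
    convert mul_mem (inv_mem hzy) (hconj ▸ h i) using 1
    group

theorem pow_a_eq_one_of_forall_commutator_mem (hK : d.Admissible K) (j : ℕ)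
    (h : ∀ i, (d.a ^ j)⁻¹ * (d.y i)⁻¹ * d.a ^ j * d.y i ∈ K) : d.a ^ j = 1 := by
  refine d.pow_a_eq_one_of_k_pow_eq_one (by_contra fun hne => ?_)
  refine hK.not_forall_y_zpow_mem (c := 1 - ((d.k ^ j : ℕ) : ℤ)) ?_ fun i => ?_
  · rw [← ZMod.intCast_zmod_eq_zero_iff_dvd]; push_cast; exact sub_ne_zero.mpr (Ne.symm hne)
  · have hcomm : (d.a ^ j)⁻¹ * (d.y i)⁻¹ * d.a ^ j * d.y i =
        d.y i ^ (1 - ((d.k ^ j : ℕ) : ℤ)) := by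
      calc _ = ((d.a ^ j)⁻¹ * d.y i * d.a ^ j)⁻¹ * d.y i := by group
        _ = _ := by rw [conj_y_pow_a, ← zpow_natCast]; group
    exact hcomm ▸ h i

theorem normalizer_eq (hK : d.Admissible K) : normalizer (K : Set G) = d.H ⊔ closure {d.t} := by
  refine le_antisymm (fun g hg => ?_) hK.sup_closure_t_le_normalizer
  obtain ⟨u, hu, j, m, rfl⟩ := d.exists_eq_mul_pow_a_zpow_b g
  have ha := (hK.mem_normalizer_iff_pow_a_mem hu j m).mp hg
  have hdvd := hK.two_pow_dvd_of_forall_conj_mem j fun i =>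
    (mem_normalizer_iff''.mp ha _).mp (hK.z_mul_y_mem i)
  exact mul_mem (mul_mem (mem_sup_left (d.P_le_H hu))
    (mem_sup_right (d.pow_a_mem_closure_t_of_dvd hdvd))) (mem_sup_left (zpow_mem d.b_mem_H m))

theorem normalizer_le_normalizer_H (hK : d.Admissible K) :
    normalizer (K : Set G) ≤ normalizer (d.H : Set G) := by
  rw [hK.normalizer_eq]
  exact sup_le le_normalizer
    ((closure_le _).mpr (Set.singleton_subset_iff.mpr d.t_mem_normalizer_H))

theorem eq_H_of_abelianQuot (hK : d.Admissible K) {C : Subgroup G} (hab : AbelianQuot C K)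
    (hHC : d.H ≤ C) : C = d.H := by
  refine le_antisymm (fun c hc => ?_) hHC
  obtain ⟨u, hu, j, m, rfl⟩ := d.exists_eq_mul_pow_a_zpow_b c
  have haC : d.a ^ j ∈ C := (mul_mem_cancel_left (hHC (d.P_le_H hu))).mp
    ((mul_mem_cancel_right (hHC (zpow_mem d.b_mem_H m))).mp hc)
  rw [hK.pow_a_eq_one_of_forall_commutator_mem j fun i =>
    hab _ haC _ (hHC (d.P_le_H (d.y_mem_P i))), mul_one]
  exact mul_mem (d.P_le_H hu) (zpow_mem d.b_mem_H m)

theorem exists_notMem_conj_mem (hK : d.Admissible K) {g : G}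
    (hg : g ∉ normalizer (K : Set G)) : ∃ v ∈ d.H, v ∉ K ∧ g * v * g⁻¹ ∈ K := by
  obtain ⟨u, hu, j, m, rfl⟩ := d.exists_eq_mul_pow_a_zpow_b g
  obtain ⟨i, hi⟩ : ∃ i, (d.a ^ j)⁻¹ * (d.z i * d.y i) * d.a ^ j ∉ K := by
    by_contra! h
    exact hg ((hK.mem_normalizer_iff_pow_a_mem hu j m).mpr (hK.sup_closure_t_le_normalizer
      (mem_sup_right (d.pow_a_mem_closure_t_of_dvd (hK.two_pow_dvd_of_forall_conj_mem j h)))))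
  have hb := zpow_mem (hK.normalIn.le_normalizer d.b_mem_H) m
  have hu := hK.normalIn.le_normalizer (d.P_le_H hu)
  refine ⟨(d.a ^ j * d.b ^ m)⁻¹ * (d.z i * d.y i) * (d.a ^ j * d.b ^ m), d.P_le_H ?_,
    fun hv => hi ?_, ?_⟩
  · simpa using d.normal_P.conj_mem _ (mul_mem (d.z_mem_P i) (d.y_mem_P i)) (d.a ^ j * d.b ^ m)⁻¹
  · simpa [mul_assoc] using (mem_normalizer_iff.mp hb _).mp hv
  · simpa [mul_assoc] using (mem_normalizer_iff.mp hu _).mp (hK.z_mul_y_mem i)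

end Admissible

end Paper.GData

/-- For `H = ⟨P, b⟩` and `K ⊴ H` with `K ≠ H`, `K ≠ P` and `H/K`
cyclic: `N_G(K) = ⟨P, b, a^{2^{n-2}}⟩` and `(H,K)` is a strong Shoda pair of `G`. -/
theorem stmt11 {G : Type*} [Group G] [Fintype G] (d : Paper.GData G)
    (H K : Subgroup G) (hH : H = d.P ⊔ Subgroup.closure {d.b})
    (hKH : K ≤ H) (hKnormal : Paper.NormalIn H K) (hKne : K ≠ H) (hKP : K ≠ d.P)
    (hcyc : Paper.CyclicQuot H K) :
    Subgroup.normalizer (K : Set G) = d.P ⊔ Subgroup.closure {d.b} ⊔ Subgroup.closure {d.a ^ 2 ^ (d.n - 2)} ∧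
    Paper.IsStrongShodaPair H K := by
  subst hH
  have hK : d.Admissible K := .of_cyclicQuot hKH hKnormal hKne hKP hcyc
  refine ⟨hK.normalizer_eq, ⟨hKnormal.le_normalizer, fun g hg h hh => ?_⟩,
    ⟨hcyc, hK.abelianQuot, fun C _ _ hab hHC => hK.eq_H_of_abelianQuot hab hHC⟩, fun g hg => ?_⟩
  · exact (Subgroup.mem_normalizer_iff''.mp (hK.normalizer_le_normalizer_H hg) h).mp hh
  · obtain ⟨v, hvH, hvK, hgv⟩ := hK.exists_notMem_conj_mem hg
    exact Paper.eps_mul_conj_eps_eq_zero hKH hKnormal hK.abelianQuot hvH hvK hgv
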